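/- arXiv:1708.07373 — 3 statements merged into one kernel-verified Lean document; each statement's English description precedes it below -/
import Mathlib

section
/- Every bounded set A ⊆ ℝ^n is contained in a closed ball of radius diam(A)/√2. -/
/-!
For finitely many points `pᵢ`, maximise the weighted variance
`V w = ∑ wᵢ ‖pᵢ‖² - ‖∑ wᵢ • pᵢ‖²` over the standard simplex. At a maximiser `w`, shifting a little
weight towards `pⱼ` cannot increase `V`, which forces `‖pⱼ - c‖² ≤ V w` for the barycentre
`c = ∑ wᵢ • pᵢ`, while `2 V w = ∑ᵢ ∑ₖ wᵢ wₖ ‖pᵢ - pₖ‖² ≤ D²` when all `‖pᵢ - pₖ‖ ≤ D`.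
Hence the closed balls of radius `diam A / √2` centred at the points of `A` have the finite
intersection property, and compactness of closed balls gives a common point.
-/

open Metric

noncomputable section

abbrev Euc (d : ℕ) := EuclideanSpace ℝ (Fin d)

def Spherical {d : ℕ} (A : Set (Euc d)) : Prop :=
  ∃ (c : Euc d) (ρ : ℝ), A ⊆ Metric.sphere c ρ

noncomputable def circumradius {d : ℕ} (A : Set (Euc d)) : ℝ :=
  sInf {ρ : ℝ | ∃ c : Euc d, A ⊆ Metric.closedBall c ρ}

def EucCongruent {d D : ℕ} (A : Set (Euc d)) (A' : Set (Euc D)) : Prop :=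
  ∃ f : Euc d → Euc D, Isometry f ∧ f '' A = A'

def DiameterRamsey {d : ℕ} (A : Set (Euc d)) : Prop :=
  ∀ r : ℕ, 0 < r → ∃ (n : ℕ) (B : Set (Euc n)), B.Finite ∧
    Metric.diam B = Metric.diam A ∧
    ∀ χ : Euc n → Fin r, ∃ A' : Set (Euc n), A' ⊆ B ∧ EucCongruent A A' ∧
      ∀ x ∈ A', ∀ y ∈ A', χ x = χ y

open scoped RealInnerProductSpace

theorem nonpos_of_forall_mul_le_sq_mul {a b : ℝ} (hb : 0 ≤ b)
    (h : ∀ t, 0 < t → t ≤ 1 → t * a ≤ t ^ 2 * b) : a ≤ 0 := by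
  by_contra! ha
  have hab : 0 < a + b := by linarith
  have key := h (a / (a + b)) (by positivity) ((div_le_one hab).2 (by linarith))
  field_simp at key
  nlinarith

section WeightedVariance

variable {E : Type*} [NormedAddCommGroup E] [InnerProductSpace ℝ E] {ι : Type*} [Fintype ι]

def weightedVariance (w : ι → ℝ) (p : ι → E) : ℝ :=
  ∑ i, w i * ‖p i‖ ^ 2 - ‖∑ i, w i • p i‖ ^ 2

theorem continuous_weightedVariance (p : ι → E) : Continuous (weightedVariance · p) := by
  unfold weightedVariance
  fun_prop

theorem sum_sum_mul_norm_sub_sq {w : ι → ℝ} (hw : ∑ i, w i = 1) (p : ι → E) :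
    ∑ i, ∑ k, w i * w k * ‖p i - p k‖ ^ 2 = 2 * weightedVariance w p := by
  have hterm : ∀ i k, w i * w k * ‖p i - p k‖ ^ 2 = w k * (w i * ‖p i‖ ^ 2)
      + w i * (w k * ‖p k‖ ^ 2) - 2 * (w i * (w k * ⟪p k, p i⟫)) := by
    intro i k
    rw [norm_sub_sq_real, real_inner_comm]
    ring
  have hsq : ‖∑ i, w i • p i‖ ^ 2 = ∑ i, w i * ∑ k, w k * ⟪p k, p i⟫ := by
    simp only [← real_inner_self_eq_norm_sq, sum_inner, inner_sum, real_inner_smul_left,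
      real_inner_smul_right, Finset.mul_sum]
  simp only [hterm, Finset.sum_sub_distrib, Finset.sum_add_distrib, ← Finset.mul_sum,
    ← Finset.sum_mul, hw, one_mul, weightedVariance, hsq]
  ring

theorem weightedVariance_le_sq_div_two {w : ι → ℝ} (hw : w ∈ stdSimplex ℝ ι) {p : ι → E}
    {D : ℝ} (hD : ∀ i k, dist (p i) (p k) ≤ D) : weightedVariance w p ≤ D ^ 2 / 2 := by
  have hsum : ∑ i, ∑ k, w i * w k * ‖p i - p k‖ ^ 2 ≤ D ^ 2 :=
    calc ∑ i, ∑ k, w i * w k * ‖p i - p k‖ ^ 2 ≤ ∑ i, ∑ k, w i * w k * D ^ 2 := by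
          gcongr with i _ k _
          · exact mul_nonneg (hw.1 i) (hw.1 k)
          · rw [← dist_eq_norm]; exact hD i k
      _ = D ^ 2 := by simp only [← Finset.sum_mul, ← Finset.mul_sum, hw.2, mul_one, one_mul]
  linarith [sum_sum_mul_norm_sub_sq hw.2 p]

theorem weightedVariance_mix_single [DecidableEq ι] (w : ι → ℝ) (p : ι → E) (j : ι) (t : ℝ) :
    weightedVariance ((1 - t) • w + t • (Pi.single j 1 : ι → ℝ)) p = weightedVariance w p
      + t * (‖p j - ∑ i, w i • p i‖ ^ 2 - weightedVariance w p)
      - t ^ 2 * ‖p j - ∑ i, w i • p i‖ ^ 2 := by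
  set c := ∑ i, w i • p i
  have hlin : ∑ i, ((1 - t) • w + t • (Pi.single j 1 : ι → ℝ)) i * ‖p i‖ ^ 2
      = (1 - t) * ∑ i, w i * ‖p i‖ ^ 2 + t * ‖p j‖ ^ 2 := by
    simp [add_mul, mul_assoc, Finset.sum_add_distrib, ← Finset.mul_sum, Pi.single_apply]
  have hcentre :
      ∑ i, ((1 - t) • w + t • (Pi.single j 1 : ι → ℝ)) i • p i = c + t • (p j - c) := by
    simp only [Pi.add_apply, Pi.smul_apply, smul_eq_mul, Pi.single_apply, mul_ite, mul_one,
      mul_zero, add_smul, mul_smul, ite_smul, zero_smul, Finset.sum_add_distrib, ← Finset.smul_sum,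
      Finset.sum_ite_eq', Finset.mem_univ, ↓reduceIte, c]
    module
  have hexp : ‖c + t • (p j - c)‖ ^ 2 = ‖c‖ ^ 2 + 2 * t * ⟪c, p j - c⟫ + t ^ 2 * ‖p j - c‖ ^ 2 := by
    rw [norm_add_sq_real, real_inner_smul_right, norm_smul, mul_pow, Real.norm_eq_abs, sq_abs]
    ring
  have hpj : ‖p j - c‖ ^ 2 = ‖p j‖ ^ 2 - 2 * ⟪p j, c⟫ + ‖c‖ ^ 2 := norm_sub_sq_real _ _
  have hcpj : ⟪c, p j - c⟫ = ⟪p j, c⟫ - ‖c‖ ^ 2 := by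
    rw [inner_sub_right, real_inner_self_eq_norm_sq, real_inner_comm]
  rw [weightedVariance, weightedVariance, hlin, hcentre, hexp, hcpj, hpj]
  ring

theorem norm_sub_sum_smul_sq_le_of_isMaxOn {w : ι → ℝ} {p : ι → E} (hw : w ∈ stdSimplex ℝ ι)
    (hmax : IsMaxOn (weightedVariance · p) (stdSimplex ℝ ι) w) (j : ι) :
    ‖p j - ∑ i, w i • p i‖ ^ 2 ≤ weightedVariance w p := by
  classical
  refine sub_nonpos.1 <| nonpos_of_forall_mul_le_sq_mul (sq_nonneg ‖p j - ∑ i, w i • p i‖)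
    fun t ht₀ ht₁ => ?_
  have hmix : (1 - t) • w + t • (Pi.single j 1 : ι → ℝ) ∈ stdSimplex ℝ ι :=
    convex_stdSimplex ℝ ι hw (single_mem_stdSimplex ℝ j) (by linarith) ht₀.le (by ring)
  have hle : weightedVariance ((1 - t) • w + t • (Pi.single j 1 : ι → ℝ)) p
      ≤ weightedVariance w p := hmax hmix
  rw [weightedVariance_mix_single] at hle
  linarith

theorem exists_forall_dist_le_div_sqrt_two [Nonempty ι] {p : ι → E} {D : ℝ}
    (hD : ∀ i k, dist (p i) (p k) ≤ D) : ∃ c, ∀ i, dist (p i) c ≤ D / √2 := by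
  classical
  obtain ⟨w, hw, hmax⟩ := (isCompact_stdSimplex ℝ ι).exists_isMaxOn
    ⟨_, single_mem_stdSimplex ℝ (Classical.arbitrary ι)⟩
    (continuous_weightedVariance p).continuousOn
  refine ⟨∑ i, w i • p i, fun j => ?_⟩
  have hsq : ‖p j - ∑ i, w i • p i‖ ^ 2 ≤ D ^ 2 / 2 :=
    (norm_sub_sum_smul_sq_le_of_isMaxOn hw hmax j).trans (weightedVariance_le_sq_div_two hw hD)
  calc dist (p j) (∑ i, w i • p i) ≤ √(D ^ 2 / 2) := by
        rw [dist_eq_norm]; exact Real.le_sqrt_of_sq_le hsq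
    _ = D / √2 := by rw [Real.sqrt_div' _ zero_le_two, Real.sqrt_sq (dist_nonneg.trans (hD j j))]

end WeightedVariance

theorem Set.Finite.exists_subset_closedBall_div_sqrt_two {E : Type*} [NormedAddCommGroup E]
    [InnerProductSpace ℝ E] {s : Set E} (hs : s.Finite) {D : ℝ}
    (hD : ∀ x ∈ s, ∀ y ∈ s, dist x y ≤ D) : ∃ c, s ⊆ closedBall c (D / √2) := by
  have := hs.fintype
  rcases isEmpty_or_nonempty s with hempty | _
  · exact ⟨0, fun x hx => (hempty.false ⟨x, hx⟩).elim⟩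
  obtain ⟨c, hc⟩ := exists_forall_dist_le_div_sqrt_two (p := ((↑) : s → E))
    fun x y => hD x x.2 y y.2
  exact ⟨c, fun x hx => hc ⟨x, hx⟩⟩

theorem exists_subset_closedBall_of_forall_finite {X : Type*} [PseudoMetricSpace X]
    [ProperSpace X] {A : Set X} {r : ℝ} (h : ∀ s ⊆ A, s.Finite → ∃ c, s ⊆ closedBall c r) :
    ∃ c, A ⊆ closedBall c r := by
  rcases A.eq_empty_or_nonempty with rfl | ⟨x₀, hx₀⟩
  · obtain ⟨c, -⟩ := h ∅ subset_rfl Set.finite_empty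
    exact ⟨c, Set.empty_subset _⟩
  have hfin (u : Finset A) : (closedBall x₀ r ∩ ⋂ a ∈ u, closedBall (a : X) r).Nonempty := by
    obtain ⟨c, hc⟩ := h (insert x₀ (Subtype.val '' (u : Set A)))
      (Set.insert_subset hx₀ (Subtype.coe_image_subset _ _)) ((u.finite_toSet.image _).insert x₀)
    exact ⟨c, mem_closedBall_comm.1 (hc (Set.mem_insert _ _)), Set.mem_iInter₂.2 fun a ha =>
      mem_closedBall_comm.1 (hc (Set.mem_insert_of_mem _ ⟨a, ha, rfl⟩))⟩
  obtain ⟨c, -, hc⟩ := (isCompact_closedBall x₀ r).inter_iInter_nonempty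
    (fun a : A => closedBall (a : X) r) (fun _ => isClosed_closedBall) hfin
  exact ⟨c, fun a ha => mem_closedBall_comm.1 (Set.mem_iInter.1 hc ⟨a, ha⟩)⟩

theorem exists_subset_closedBall_diam_div_sqrt_two {E : Type*} [NormedAddCommGroup E]
    [InnerProductSpace ℝ E] [ProperSpace E] {A : Set E} (hA : Bornology.IsBounded A) :
    ∃ c, A ⊆ closedBall c (diam A / √2) :=
  exists_subset_closedBall_of_forall_finite fun _s hsA hs =>
    hs.exists_subset_closedBall_div_sqrt_two fun _x hx _y hy =>
      dist_le_diam_of_mem hA (hsA hx) (hsA hy)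

theorem stmt5 {n : ℕ} (A : Set (Euc n)) (hA : Bornology.IsBounded A) :
    ∃ c : Euc n, A ⊆ Metric.closedBall c (Metric.diam A / Real.sqrt 2) :=
  exists_subset_closedBall_diam_div_sqrt_two hA
end
end

section
/- A triangle in the Euclidean plane having an angle strictly greater than 135° (3π/4 radians) is not diameter-Ramsey. -/
/-!
A set of diameter `D` in Euclidean space lies in a ball of radius `D / √2` (a weak form of Jung's
theorem), whereas a triangle with an angle above `3π/4` has circumradius larger than `D / √2`,
where `D` is its longest side. Colour the points of a finite set `B` of diameter `D` by thin
bands of their squared distance to the centre `O` of such a ball. A monochromatic copy `X, Y, Z`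
of the triangle would then be almost equidistant from `O`, at squared distance at most `D² / 2`;
but the Gram determinant of `X - O, Y - O, Z - O`, written in terms of the squared distances,
is then negative, which is impossible.
-/

open Metric

noncomputable section

open Filter Topology EuclideanGeometry Real
open RealInnerProductSpace

section Gram

variable {E : Type*} [NormedAddCommGroup E] [InnerProductSpace ℝ E]

/-- The Gram matrix of `X - O, Y - O, Z - O` when `x₁, x₂, x₃` are the squared distances of
`X, Y, Z` to `O` and `A = |YZ|²`, `B = |XZ|²`, `C = |XY|²`. -/
def gramOfSqDists (A B C x₁ x₂ x₃ : ℝ) : Matrix (Fin 3) (Fin 3) ℝ :=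
  !![x₁, (x₁ + x₂ - C) / 2, (x₁ + x₃ - B) / 2;
     (x₁ + x₂ - C) / 2, x₂, (x₂ + x₃ - A) / 2;
     (x₁ + x₃ - B) / 2, (x₂ + x₃ - A) / 2, x₃]

lemma inner_sub_sub_eq_dist_sq (X Y O : E) :
    ⟪X - O, Y - O⟫ = (dist X O ^ 2 + dist Y O ^ 2 - dist X Y ^ 2) / 2 := by
  rw [real_inner_eq_norm_mul_self_add_norm_mul_self_sub_norm_sub_mul_self_div_two,
    sub_sub_sub_cancel_right, dist_eq_norm, dist_eq_norm, dist_eq_norm]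
  ring

lemma gram_eq_gramOfSqDists (X Y Z O : E) :
    Matrix.gram ℝ ![X - O, Y - O, Z - O] = gramOfSqDists (dist Y Z ^ 2) (dist X Z ^ 2)
      (dist X Y ^ 2) (dist X O ^ 2) (dist Y O ^ 2) (dist Z O ^ 2) := by
  ext i j
  fin_cases i <;> fin_cases j <;>
    simp [gramOfSqDists, inner_sub_sub_eq_dist_sq, dist_comm, dist_eq_norm, add_comm]

lemma det_gramOfSqDists_nonneg (X Y Z O : E) :
    0 ≤ (gramOfSqDists (dist Y Z ^ 2) (dist X Z ^ 2) (dist X Y ^ 2)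
      (dist X O ^ 2) (dist Y O ^ 2) (dist Z O ^ 2)).det := by
  rw [← gram_eq_gramOfSqDists]
  exact (Matrix.posSemidef_gram ℝ _).det_nonneg

end Gram

/- Expansion around `x₁ = x₂ = x₃`. With `K = A + C - B`, Heron's formula reads
`16 area² = 4AC - K²` and the squared circumradius is `ABC / (4AC - K²)`, so the leading term
`x₃ (4AC - K²) - ABC` is negative exactly when `x₃` is below the squared circumradius. -/
lemma four_mul_det_gramOfSqDists (A B C x₁ x₂ x₃ : ℝ) :
    4 * (gramOfSqDists A B C x₁ x₂ x₃).det =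
      x₃ * (4 * A * C - (A + C - B) ^ 2) - A * B * C
        + (x₂ - x₃) * B * (A + C - B) - B * (x₂ - x₃) ^ 2
        + (x₁ - x₃) * A * (B + C - A) - A * (x₁ - x₃) ^ 2
        + (x₁ - x₃) * (x₂ - x₃) * (A + B - C) := by
  rw [gramOfSqDists, Matrix.det_fin_three]
  simp only [Matrix.of_apply, Matrix.cons_val', Matrix.cons_val_zero, Matrix.cons_val_one,
    Matrix.cons_val_two, Matrix.empty_val', Matrix.cons_val_fin_one, Matrix.head_cons,
    Matrix.tail_cons, Matrix.head_fin_const]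
  ring

lemma det_gramOfSqDists_neg {A B C x₁ x₂ x₃ d : ℝ} (hA : 0 < A) (hC : 0 < C)
    (hK : A + C < B) (hK2 : 2 * (A * C) < (A + C - B) ^ 2)
    (hK4 : (A + C - B) ^ 2 ≤ 4 * (A * C)) (hx₃ : x₃ ≤ B / 2)
    (h₁ : |x₁ - x₃| ≤ d) (h₂ : |x₂ - x₃| ≤ d)
    (hd : 16 * B * d ≤ (A + C - B) ^ 2 - 2 * (A * C)) :
    (gramOfSqDists A B C x₁ x₂ x₃).det < 0 := by
  rw [abs_le] at h₁ h₂
  have hd0 : 0 ≤ d := by linarith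
  have hB : 0 < B := by linarith
  have hdB : d ≤ B := by nlinarith [sq_nonneg (A - C)]
  have hlead : x₃ * (4 * A * C - (A + C - B) ^ 2) - A * B * C
      ≤ -(B / 2) * ((A + C - B) ^ 2 - 2 * (A * C)) := by
    nlinarith [mul_nonneg (by linarith : (0 : ℝ) ≤ B / 2 - x₃)
      (by linarith : (0 : ℝ) ≤ 4 * (A * C) - (A + C - B) ^ 2)]
  -- each correction term is at most `2 d B²`, which is small against the leading term
  have he₂ : (x₂ - x₃) * B * (A + C - B) ≤ d * B ^ 2 := by
    nlinarith [mul_nonneg (mul_nonneg (by linarith : (0 : ℝ) ≤ x₂ - x₃ + d) hB.le)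
        (by linarith : (0 : ℝ) ≤ B - A - C),
      mul_nonneg (mul_nonneg hd0 hB.le) (by linarith : (0 : ℝ) ≤ A + C)]
  have he₁ : (x₁ - x₃) * A * (B + C - A) ≤ 2 * (d * B ^ 2) := by
    nlinarith [mul_nonneg (mul_nonneg (by linarith : (0 : ℝ) ≤ d - (x₁ - x₃)) hA.le)
        (by linarith : (0 : ℝ) ≤ B + C - A),
      mul_nonneg hd0 (mul_nonneg (by linarith : (0 : ℝ) ≤ B - A)
        (by linarith : (0 : ℝ) ≤ B + C - A)),
      mul_nonneg hd0 (mul_nonneg hB.le (by linarith : (0 : ℝ) ≤ B - C + A))]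
  have he₁₂ : (x₁ - x₃) * (x₂ - x₃) * (A + B - C) ≤ 2 * (d * B ^ 2) := by
    have hprod : (x₁ - x₃) * (x₂ - x₃) ≤ d * B := by nlinarith
    nlinarith [mul_nonneg (by linarith : (0 : ℝ) ≤ d * B - (x₁ - x₃) * (x₂ - x₃))
        (by linarith : (0 : ℝ) ≤ A + B - C),
      mul_nonneg (mul_nonneg hd0 hB.le) (by linarith : (0 : ℝ) ≤ B - A + C)]
  nlinarith [four_mul_det_gramOfSqDists A B C x₁ x₂ x₃, sq_nonneg (x₁ - x₃),
    sq_nonneg (x₂ - x₃), mul_le_mul_of_nonneg_left hd hB.le]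

lemma Finset.exists_forall_sup'_dist_le {α : Type*} [MetricSpace α] [ProperSpace α]
    (F : Finset α) (hF : F.Nonempty) :
    ∃ c, ∀ z, F.sup' hF (dist · c) ≤ F.sup' hF (dist · z) := by
  obtain ⟨x₀, hx₀⟩ := id hF
  have : Nonempty α := ⟨x₀⟩
  refine (Continuous.finset_sup'_apply hF fun x _ ↦ continuous_const.dist continuous_id)
    |>.exists_forall_le ?_
  exact tendsto_atTop_mono (fun z ↦ F.le_sup' (dist · z) hx₀)
    (tendsto_dist_left_cocompact_atTop x₀)

section Jung

variable {E : Type*} [NormedAddCommGroup E] [InnerProductSpace ℝ E]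

lemma eventually_dist_add_smul_lt_dist {x c v : E} (h : 0 < ⟪v, x - c⟫) :
    ∀ᶠ t in 𝓝[>] (0 : ℝ), dist x (c + t • v) < dist x c := by
  have hsmall : ∀ᶠ t in 𝓝[>] (0 : ℝ), t * ‖v‖ ^ 2 < 2 * ⟪v, x - c⟫ := by
    have hcont : Tendsto (fun t : ℝ ↦ t * ‖v‖ ^ 2) (𝓝 0) (𝓝 0) := by
      simpa using (continuous_mul_const (‖v‖ ^ 2)).tendsto 0
    exact (hcont.mono_left nhdsWithin_le_nhds).eventually (gt_mem_nhds (by linarith))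
  filter_upwards [hsmall, self_mem_nhdsWithin] with t ht (ht0 : 0 < t)
  have hsq :
      dist x (c + t • v) ^ 2 = dist x c ^ 2 - t * (2 * ⟪v, x - c⟫ - t * ‖v‖ ^ 2) := by
    rw [dist_eq_norm, dist_eq_norm, show x - (c + t • v) = (x - c) - t • v by abel,
      norm_sub_sq_real, inner_smul_right, norm_smul, real_inner_comm, mul_pow,
      Real.norm_eq_abs, sq_abs]
    ring
  have : dist x (c + t • v) ^ 2 < dist x c ^ 2 := by nlinarith
  exact lt_of_pow_lt_pow_left₀ 2 dist_nonneg this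

/- If every farthest point of `F` had `⟪v, y - c⟫ > 0`, moving `c` slightly in the direction `v`
would bring it strictly closer to all of `F`. -/
lemma Finset.exists_dist_eq_sup'_inner_nonpos {F : Finset E} (hF : F.Nonempty) {c : E}
    (hc : ∀ z, F.sup' hF (dist · c) ≤ F.sup' hF (dist · z)) (v : E) :
    ∃ y ∈ F, dist y c = F.sup' hF (dist · c) ∧ ⟪v, y - c⟫ ≤ 0 := by
  by_contra! hfar
  have hnear :
      ∀ x ∈ F, ∀ᶠ t in 𝓝[>] (0 : ℝ), dist x (c + t • v) < F.sup' hF (dist · c) := by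
    intro x hx
    rcases (F.le_sup' (dist · c) hx).lt_or_eq with hlt | heq
    · have hcont : ContinuousWithinAt (fun t : ℝ ↦ dist x (c + t • v)) (Set.Ioi 0) 0 := by
        fun_prop
      exact hcont.eventually_lt continuousWithinAt_const
        (by simpa only [zero_smul, add_zero] using hlt)
    · exact (eventually_dist_add_smul_lt_dist (hfar x hx heq)).mono fun t ht ↦ ht.trans_eq heq
  obtain ⟨t, ht⟩ := ((eventually_all_finset F).2 hnear).exists
  exact absurd (hc (c + t • v)) (not_le.2 ((F.sup'_lt_iff hF).2 ht))

/- Take `c` minimizing the largest distance `ρ` to `B` and a farthest point `y₀`; a farthest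
point `y` with `⟪y₀ - c, y - c⟫ ≤ 0` gives `diam B ^ 2 ≥ dist y₀ y ^ 2 ≥ 2 ρ ^ 2`. -/
theorem Set.Finite.exists_two_mul_dist_sq_le_diam_sq [ProperSpace E] {B : Set E}
    (hB : B.Finite) : ∃ c, ∀ x ∈ B, 2 * dist x c ^ 2 ≤ diam B ^ 2 := by
  rcases B.eq_empty_or_nonempty with rfl | hne
  · exact ⟨0, by simp⟩
  set F := hB.toFinset
  have hF : F.Nonempty := hB.toFinset_nonempty.2 hne
  obtain ⟨c, hc⟩ := F.exists_forall_sup'_dist_le hF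
  obtain ⟨y₀, hy₀, hy₀c⟩ := F.exists_mem_eq_sup' hF (dist · c)
  obtain ⟨y, hy, hyc, hinner⟩ := F.exists_dist_eq_sup'_inner_nonpos hF hc (y₀ - c)
  refine ⟨c, fun x hx ↦ ?_⟩
  have hxc : dist x c ≤ dist y₀ c := hy₀c ▸ F.le_sup' (dist · c) (hB.mem_toFinset.2 hx)
  have hy₀y : dist y₀ y ≤ diam B :=
    dist_le_diam_of_mem hB.isBounded (hB.mem_toFinset.1 hy₀) (hB.mem_toFinset.1 hy)
  rw [inner_sub_sub_eq_dist_sq, hyc, hy₀c] at hinner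
  nlinarith [pow_le_pow_left₀ dist_nonneg hxc 2, pow_le_pow_left₀ dist_nonneg hy₀y 2]

end Jung

lemma exists_fin_coloring_abs_sub_lt {α : Type*} (g : α → ℝ) (M : ℝ) {d : ℝ} (hd : 0 < d) :
    ∃ χ : α → Fin (⌊M / d⌋₊ + 1), ∀ x y, g x ∈ Set.Icc 0 M → g y ∈ Set.Icc 0 M →
      χ x = χ y → |g x - g y| < d := by
  refine ⟨fun x ↦ ⟨min ⌊g x / d⌋₊ ⌊M / d⌋₊, Nat.lt_succ_of_le (min_le_right _ _)⟩, ?_⟩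
  intro x y hx hy hxy
  have hfloor : ∀ z, g z ∈ Set.Icc 0 M → min ⌊g z / d⌋₊ ⌊M / d⌋₊ = ⌊g z / d⌋₊ :=
    fun z hz ↦ min_eq_left (Nat.floor_le_floor (div_le_div_of_nonneg_right hz.2 hd.le))
  have heq : ⌊g x / d⌋₊ = ⌊g y / d⌋₊ := by
    simpa only [Fin.mk.injEq, hfloor x hx, hfloor y hy] using hxy
  have hint : ⌊g x / d⌋ = ⌊g y / d⌋ := by
    rw [← Int.natCast_floor_eq_floor (div_nonneg hx.1 hd.le),
      ← Int.natCast_floor_eq_floor (div_nonneg hy.1 hd.le), heq]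
  have := Int.abs_sub_lt_one_of_floor_eq_floor hint
  rwa [← sub_div, abs_div, abs_of_pos hd, div_lt_one hd] at this

lemma diam_triple_eq_dist_of_sq_add_sq_lt {α : Type*} [PseudoMetricSpace α] {p q s : α}
    (h : dist q s ^ 2 + dist p q ^ 2 < dist p s ^ 2) : diam ({p, q, s} : Set α) = dist p s := by
  have hqs : dist q s ≤ dist p s :=
    le_of_pow_le_pow_left₀ two_ne_zero dist_nonneg (by linarith [sq_nonneg (dist p q)])
  have hpq : dist p q ≤ dist p s :=
    le_of_pow_le_pow_left₀ two_ne_zero dist_nonneg (by linarith [sq_nonneg (dist q s)])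
  rw [diam_triple, max_eq_right hpq, max_eq_left hqs]

/- By the law of cosines `|qs|² + |pq|² - |ps|² = 2 |qs| |pq| cos ∠pqs`, and `cos ∠pqs < -√2/2`. -/
lemma EuclideanGeometry.sq_dist_bounds_of_three_pi_div_four_lt_angle {V P : Type*}
    [NormedAddCommGroup V] [InnerProductSpace ℝ V] [MetricSpace P] [NormedAddTorsor V P]
    {p q s : P} (h : 3 * π / 4 < ∠ p q s) :
    0 < dist q s ^ 2 ∧ 0 < dist p q ^ 2 ∧ dist q s ^ 2 + dist p q ^ 2 < dist p s ^ 2 ∧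
      2 * (dist q s ^ 2 * dist p q ^ 2) < (dist q s ^ 2 + dist p q ^ 2 - dist p s ^ 2) ^ 2 ∧
      (dist q s ^ 2 + dist p q ^ 2 - dist p s ^ 2) ^ 2 ≤ 4 * (dist q s ^ 2 * dist p q ^ 2) := by
  have hpq : p ≠ q := by rintro rfl; rw [angle_self_left] at h; linarith [pi_pos]
  have hsq : s ≠ q := by rintro rfl; rw [angle_self_right] at h; linarith [pi_pos]
  have hcos : cos (∠ p q s) < -(√2 / 2) := by
    rw [← cos_pi_div_four, ← cos_pi_sub]
    exact cos_lt_cos_of_nonneg_of_le_pi (by linarith [pi_pos]) (angle_le_pi p q s) (by linarith)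
  have hK : dist q s ^ 2 + dist p q ^ 2 - dist p s ^ 2 =
      2 * (dist q s * dist p q) * cos (∠ p q s) := by
    have := law_cos p q s
    rw [dist_comm s q] at this
    linear_combination -this
  have ha := dist_pos.2 hsq.symm
  have hc := dist_pos.2 hpq
  have hac := mul_pos ha hc
  have hcos2 : 1 < 2 * cos (∠ p q s) ^ 2 := by
    nlinarith [sq_sqrt (zero_le_two : (0 : ℝ) ≤ 2), sqrt_nonneg 2]
  refine ⟨by positivity, by positivity, ?_, ?_, ?_⟩
  · nlinarith [mul_neg_of_pos_of_neg hac (hcos.trans_le (neg_nonpos.2 (by positivity)))]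
  · rw [hK]; nlinarith [mul_pos (mul_pos hac hac) (sub_pos.2 hcos2)]
  · rw [hK]
    nlinarith [mul_nonneg (mul_self_nonneg (dist q s * dist p q))
      (sub_nonneg.2 (cos_sq_le_one (∠ p q s)))]

theorem stmt7_general (p q s : Euc 2)
    (hobtuse : EuclideanGeometry.angle p q s > 3 * Real.pi / 4) :
    ¬ DiameterRamsey ({p, q, s} : Set (Euc 2)) := by
  obtain ⟨hA, hC, hK, hK2, hK4⟩ := sq_dist_bounds_of_three_pi_div_four_lt_angle hobtuse
  have hB : 0 < dist p s ^ 2 := by linarith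
  set δ := ((dist q s ^ 2 + dist p q ^ 2 - dist p s ^ 2) ^ 2
    - 2 * (dist q s ^ 2 * dist p q ^ 2)) / (16 * dist p s ^ 2)
  have hδ : 0 < δ := div_pos (by linarith) (by positivity)
  intro hDR
  obtain ⟨n, S, hSfin, hSdiam, hS⟩ := hDR (⌊dist p s ^ 2 / 2 / δ⌋₊ + 1) (Nat.succ_pos _)
  obtain ⟨O, hO⟩ := hSfin.exists_two_mul_dist_sq_le_diam_sq
  obtain ⟨χ, hχ⟩ := exists_fin_coloring_abs_sub_lt (dist · O ^ 2) (dist p s ^ 2 / 2) hδ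
  obtain ⟨_, hsub, ⟨f, hf, rfl⟩, hmono⟩ := hS χ
  rw [diam_triple_eq_dist_of_sq_add_sq_lt hK] at hSdiam
  have hband :
      ∀ x ∈ ({p, q, s} : Set (Euc 2)), dist (f x) O ^ 2 ∈ Set.Icc 0 (dist p s ^ 2 / 2) :=
    fun x hx ↦ ⟨by positivity, by linarith [hSdiam ▸ hO (f x) (hsub ⟨x, hx, rfl⟩)]⟩
  have hclose : ∀ x ∈ ({p, q, s} : Set (Euc 2)), |dist (f x) O ^ 2 - dist (f s) O ^ 2| ≤ δ :=
    fun x hx ↦ (hχ _ _ (hband x hx) (hband s (by simp))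
      (hmono _ ⟨x, hx, rfl⟩ _ ⟨s, by simp, rfl⟩)).le
  have hneg := det_gramOfSqDists_neg hA hC hK hK2 hK4 (hband s (by simp)).2
    (hclose p (by simp)) (hclose q (by simp)) (mul_div_cancel₀ _ (by positivity)).le
  have hnonneg := det_gramOfSqDists_nonneg (f p) (f q) (f s) O
  simp only [hf.dist_eq] at hnonneg
  exact hnonneg.not_gt hneg

theorem stmt7 (p q s : Euc 2) (hncol : ¬ Collinear ℝ ({p, q, s} : Set (Euc 2)))
    (hobtuse : EuclideanGeometry.angle p q s > 3 * Real.pi / 4) :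
    ¬ DiameterRamsey ({p, q, s} : Set (Euc 2)) :=
  stmt7_general p q s hobtuse
end
end

section
/- For every d ≥ 2, the d-simplex constructed with d vertices forming a regular (d−1)-simplex of side 1 on the boundary of a (d−1)-ball and an apex at distance √(1 − 1/√d + O(δ)) from each of them (as δ → 0⁺) is ε-almost regular for any ε > √d/C(d+1,2) when δ is sufficiently small; that is, its almost-regularity defect (1/C(d+1,2))·Σ_{i<j}(diam² − ‖pᵢ−pⱼ‖²) tends to √d/C(d+1,2)·diam² as δ → 0. -/
/-! With `r = √(1/2 + δ)` and `a = √(1/(2d) + δ)`, every base vertex has norm `r` and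
`i`-th coordinate `a`, so its squared distance to the apex `r • e_i` is `2r² - 2ra = 1 - 2(ra - δ)`,
which is `< 1` because `r²a² > δ²`. Hence the diameter is the side `1` of the base, and only the
`d` edges at the apex contribute to the defect, each by `2(ra - δ)`. As `δ → 0⁺`,
`d · 2ra → 2d · √(1/2) · √(1/(2d)) = √d`. -/

open Metric

noncomputable section

noncomputable def defect {d : ℕ} (p : Fin (d + 1) → Euc d) : ℝ :=
  (1 / ((d + 1).choose 2 : ℝ)) *
    ∑ ij ∈ Finset.univ.filter (fun ij : Fin (d + 1) × Fin (d + 1) => ij.1 < ij.2),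
      (Metric.diam (Set.range p) ^ 2 - dist (p ij.1) (p ij.2) ^ 2)


open Finset Filter Topology

theorem sum_filter_lt_fin_succ {M : Type*} [AddCommMonoid M] (n : ℕ)
    (f : Fin (n + 1) × Fin (n + 1) → M) :
    ∑ ij ∈ univ.filter (fun ij : Fin (n + 1) × Fin (n + 1) => ij.1 < ij.2), f ij =
      ∑ ij ∈ univ.filter (fun ij : Fin n × Fin n => ij.1 < ij.2),
          f (ij.1.castSucc, ij.2.castSucc) +
        ∑ k : Fin n, f (k.castSucc, Fin.last n) := by
  simp only [sum_filter, Fintype.sum_prod_type, Fin.sum_univ_castSucc,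
    Fin.castSucc_lt_castSucc_iff, Fin.castSucc_lt_last, lt_irrefl, not_lt.mpr (Fin.le_last _),
    if_true, if_false, sum_const_zero, add_zero]
  exact sum_add_distrib

theorem diam_range_eq_of_forall_dist_le {ι α : Type*} [Finite ι] [PseudoMetricSpace α]
    {p : ι → α} {D : ℝ} (hle : ∀ i j, dist (p i) (p j) ≤ D) {i j : ι}
    (hij : dist (p i) (p j) = D) : diam (Set.range p) = D := by
  refine le_antisymm (diam_le_of_forall_dist_le (hij ▸ dist_nonneg) ?_) ?_
  · rintro _ ⟨k, rfl⟩ _ ⟨l, rfl⟩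
    exact hle k l
  · exact hij ▸ dist_le_diam_of_mem (Set.finite_range p).isBounded ⟨i, rfl⟩ ⟨j, rfl⟩

theorem EuclideanSpace.dist_single_sq {ι : Type*} [Fintype ι] [DecidableEq ι]
    (x : EuclideanSpace ℝ ι) (i : ι) (c : ℝ) :
    dist x (EuclideanSpace.single i c) ^ 2 = ‖x‖ ^ 2 - 2 * c * x i + c ^ 2 := by
  rw [dist_eq_norm, norm_sub_sq_real, EuclideanSpace.inner_single_right,
    EuclideanSpace.single, PiLp.norm_single, Real.norm_eq_abs, sq_abs]
  simp only [conj_trivial]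
  ring

theorem lt_sqrt_add_mul_sqrt_add {δ b c : ℝ} (hδ : 0 ≤ δ) (hb : 0 < b) (hc : 0 < c) :
    δ < √(b + δ) * √(c + δ) :=
  calc δ = √δ * √δ := (Real.mul_self_sqrt hδ).symm
    _ < √(b + δ) * √(c + δ) :=
      mul_lt_mul'' (Real.sqrt_lt_sqrt hδ (by linarith)) (Real.sqrt_lt_sqrt hδ (by linarith))
        (Real.sqrt_nonneg _) (Real.sqrt_nonneg _)

theorem mul_two_mul_sqrt_half_mul_sqrt {x : ℝ} (hx : 0 < x) :
    x * (2 * (√(1 / 2) * √(1 / (2 * x)))) = √x := by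
  have hsq : 1 / 2 * (1 / (2 * x)) = (√x / (2 * x)) ^ 2 := by
    rw [div_pow, Real.sq_sqrt hx.le]
    field_simp
  rw [← Real.sqrt_mul (by norm_num), hsq, Real.sqrt_sq (by positivity)]
  field_simp

theorem defect_eq_of_dist_castSucc {d : ℕ} (p : Fin (d + 1) → Euc d) {s : ℝ}
    (hbase : ∀ k l : Fin d, k ≠ l →
      dist (p k.castSucc) (p l.castSucc) = diam (Set.range p))
    (hapex : ∀ k : Fin d, dist (p k.castSucc) (p (Fin.last d)) ^ 2 = s) :
    defect p = d * (diam (Set.range p) ^ 2 - s) / ((d + 1).choose 2 : ℝ) := by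
  have hbase_zero : ∀ kl ∈ univ.filter (fun kl : Fin d × Fin d => kl.1 < kl.2),
      diam (Set.range p) ^ 2 - dist (p kl.1.castSucc) (p kl.2.castSucc) ^ 2 = 0 := by
    intro kl hkl
    rw [hbase _ _ (mem_filter.mp hkl).2.ne, sub_self]
  rw [defect, sum_filter_lt_fin_succ, sum_eq_zero hbase_zero, zero_add]
  simp only [hapex, sum_const, card_univ, Fintype.card_fin, nsmul_eq_mul]
  ring

section Construction

variable {d : ℕ} (q : Fin (d + 1) → Euc d) (i : Fin d) {r a : ℝ}

theorem dist_castSucc_last_sq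
    (hbase : ∀ k : Fin d, q k.castSucc i = a ∧ ‖q k.castSucc‖ = r)
    (hapex : q (Fin.last d) = EuclideanSpace.single i r) (k : Fin d) :
    dist (q k.castSucc) (q (Fin.last d)) ^ 2 = 2 * r ^ 2 - 2 * r * a := by
  rw [hapex, EuclideanSpace.dist_single_sq, (hbase k).1, (hbase k).2]
  ring

theorem diam_range_eq_one (hd : 2 ≤ d)
    (hunit : ∀ k l : Fin d, k ≠ l → dist (q k.castSucc) (q l.castSucc) = 1)
    (hapex : ∀ k : Fin d, dist (q k.castSucc) (q (Fin.last d)) ≤ 1) :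
    diam (Set.range q) = 1 := by
  have h01 : (⟨0, by omega⟩ : Fin d) ≠ ⟨1, by omega⟩ := by simp
  refine diam_range_eq_of_forall_dist_le (fun u v => ?_) (hunit _ _ h01)
  induction u using Fin.lastCases with
  | last =>
    induction v using Fin.lastCases with
    | last => simp
    | cast v => rw [dist_comm]; exact hapex v
  | cast u =>
    induction v using Fin.lastCases with
    | last => exact hapex u
    | cast v =>
      rcases eq_or_ne u v with rfl | huv
      · simp
      · exact (hunit u v huv).le

end Construction

theorem diam_eq_one_and_defect_eq {d : ℕ} (hd : 2 ≤ d) (i : Fin d) {δ : ℝ} (hδ : 0 < δ)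
    (q : Fin (d + 1) → Euc d)
    (hunit : ∀ k l : Fin d, k ≠ l → dist (q k.castSucc) (q l.castSucc) = 1)
    (hbase : ∀ k : Fin d, q k.castSucc i = √(1 / (2 * d) + δ) ∧ ‖q k.castSucc‖ = √(1 / 2 + δ))
    (hapex : q (Fin.last d) = EuclideanSpace.single i (√(1 / 2 + δ))) :
    diam (Set.range q) = 1 ∧
      defect q = d * (2 * (√(1 / 2 + δ) * √(1 / (2 * d) + δ)) - 2 * δ) /
        ((d + 1).choose 2 : ℝ) := by
  have hr : √(1 / 2 + δ) ^ 2 = 1 / 2 + δ := Real.sq_sqrt (by positivity)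
  have hδ_lt : δ < √(1 / 2 + δ) * √(1 / (2 * d) + δ) :=
    lt_sqrt_add_mul_sqrt_add hδ.le (by norm_num) (by positivity)
  have hdist_sq : ∀ k : Fin d, dist (q k.castSucc) (q (Fin.last d)) ^ 2 =
      1 + 2 * δ - 2 * (√(1 / 2 + δ) * √(1 / (2 * d) + δ)) := by
    intro k
    rw [dist_castSucc_last_sq q i hbase hapex, hr]
    ring
  have hdist_le : ∀ k : Fin d, dist (q k.castSucc) (q (Fin.last d)) ≤ 1 := fun k =>
    (pow_le_one_iff_of_nonneg dist_nonneg two_ne_zero).mp (by linarith [hdist_sq k, hδ_lt])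
  have hdiam := diam_range_eq_one q hd hunit hdist_le
  refine ⟨hdiam, ?_⟩
  rw [defect_eq_of_dist_castSucc q (fun k l hkl => (hunit k l hkl).trans hdiam.symm) hdist_sq,
    hdiam]
  ring

theorem stmt19_general (d : ℕ) (hd : 2 ≤ d) (i : Fin d)
    (p : ℝ → Fin (d + 1) → Euc d)
    (hp : ∀ δ : ℝ, 0 < δ →
      (∀ k l : Fin d, k ≠ l → dist (p δ k.castSucc) (p δ l.castSucc) = 1) ∧
      (∀ k : Fin d, (p δ k.castSucc) i = Real.sqrt (1 / (2 * d) + δ) ∧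
        ‖p δ k.castSucc‖ = Real.sqrt (1 / 2 + δ)) ∧
      p δ (Fin.last d) = EuclideanSpace.single i (Real.sqrt (1 / 2 + δ))) :
    Filter.Tendsto (fun δ => defect (p δ)) (nhdsWithin 0 (Set.Ioi 0))
      (nhds (Real.sqrt d / ((d + 1).choose 2 : ℝ))) ∧
    ∀ ε : ℝ, ε > Real.sqrt d / ((d + 1).choose 2 : ℝ) →
      ∃ δ₁ : ℝ, 0 < δ₁ ∧ ∀ δ : ℝ, 0 < δ → δ < δ₁ →
        defect (p δ) ≤ ε * Metric.diam (Set.range (p δ)) ^ 2 := by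
  have hconf : ∀ δ, 0 < δ → diam (Set.range (p δ)) = 1 ∧
      defect (p δ) = d * (2 * (√(1 / 2 + δ) * √(1 / (2 * d) + δ)) - 2 * δ) /
        ((d + 1).choose 2 : ℝ) := fun δ hδ =>
    diam_eq_one_and_defect_eq hd i hδ (p δ) (hp δ hδ).1 (hp δ hδ).2.1 (hp δ hδ).2.2
  have hlim : Tendsto (fun δ => defect (p δ)) (𝓝[>] 0)
      (𝓝 (√d / ((d + 1).choose 2 : ℝ))) := by
    refine Tendsto.congr' (eventually_nhdsWithin_of_forall fun δ hδ => (hconf δ hδ).2.symm)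
      (tendsto_nhdsWithin_of_tendsto_nhds (Continuous.tendsto' (by fun_prop) _ _ ?_))
    simp only [add_zero, mul_zero, sub_zero]
    rw [mul_two_mul_sqrt_half_mul_sqrt (by positivity)]
  refine ⟨hlim, fun ε hε => ?_⟩
  obtain ⟨δ₁, hδ₁, hlt⟩ := (nhdsGT_basis 0).eventually_iff.mp (hlim.eventually_lt_const hε)
  refine ⟨δ₁, hδ₁, fun δ hδ hδδ₁ => ?_⟩
  rw [(hconf δ hδ).1, one_pow, mul_one]
  exact (hlt ⟨hδ, hδδ₁⟩).le

theorem stmt19 (d : ℕ) (hd : 2 ≤ d) (i : Fin d) (hi : (i : ℕ) = d - 1)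
    (p : ℝ → Fin (d + 1) → Euc d)
    (hp : ∀ δ : ℝ, 0 < δ →
      (∀ k l : Fin d, k ≠ l → dist (p δ k.castSucc) (p δ l.castSucc) = 1) ∧
      (∀ k : Fin d, (p δ k.castSucc) i = Real.sqrt (1 / (2 * d) + δ) ∧
        ‖p δ k.castSucc‖ = Real.sqrt (1 / 2 + δ)) ∧
      p δ (Fin.last d) = EuclideanSpace.single i (Real.sqrt (1 / 2 + δ))) :
    Filter.Tendsto (fun δ => defect (p δ)) (nhdsWithin 0 (Set.Ioi 0))
      (nhds (Real.sqrt d / ((d + 1).choose 2 : ℝ))) ∧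
    ∀ ε : ℝ, ε > Real.sqrt d / ((d + 1).choose 2 : ℝ) →
      ∃ δ₁ : ℝ, 0 < δ₁ ∧ ∀ δ : ℝ, 0 < δ → δ < δ₁ →
        defect (p δ) ≤ ε * Metric.diam (Set.range (p δ)) ^ 2 :=
  stmt19_general d hd i p hp
end
end
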